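/- arXiv:2107.03171 — 2 statements merged into one kernel-verified Lean document; each statement's English description precedes it below -/
import Mathlib

section
/- Let r ≥ 2 and d ≥ 1 be integers with 10·d·log₂ r < r. Then a uniformly random function F : {0,1}^r → {0,1} satisfies Pr_F[ pdeg_{1/10}(F) ≤ d ] < 1/10. -/
open scoped Classical

noncomputable def evalBool {ι : Type} (a : ι → Bool) (P : MvPolynomial ι ℝ) : ℝ :=
  MvPolynomial.eval (fun i => if a i then (1:ℝ) else 0) P

def HasProbPoly {ι : Type} (f : (ι → Bool) → Bool) (ε : ℝ) (d : ℕ) : Prop :=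
  ∃ (k : ℕ) (w : Fin k → ℝ) (P : Fin k → MvPolynomial ι ℝ),
    (∀ i, 0 ≤ w i) ∧ (∑ i, w i = 1) ∧ (∀ i, (P i).totalDegree ≤ d) ∧
    ∀ a : ι → Bool,
      ∑ i ∈ Finset.univ.filter
          (fun i => evalBool a (P i) ≠ (if f a then (1:ℝ) else 0)), w i ≤ ε

noncomputable def pdeg {ι : Type} (ε : ℝ) (f : (ι → Bool) → Bool) : ℕ :=
  sInf {d | HasProbPoly f ε d}

def TrulyVariate {ι : Type} (f : (ι → Bool) → Bool) : Prop :=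
  ∀ i : ι, ∃ a, f (Function.update a i (!(a i))) ≠ f a

def ORf (n : ℕ) : (Fin n → Bool) → Bool := fun a => decide (∃ i, a i = true)

noncomputable def sensitivity {n : ℕ} (f : (Fin n → Bool) → Bool) : ℕ :=
  Finset.univ.sup (fun a : Fin n → Bool =>
    (Finset.univ.filter (fun i : Fin n => f (Function.update a i (!(a i))) ≠ f a)).card)

/-!
Averaging a `1/10`-error probabilistic polynomial of degree `d` for `F` gives one polynomial `P`
of degree `d` that agrees with `F` outside a set `D` of at most `2^r/10` points. On the cube, `P`
is a linear functional of the vector of multilinear monomials of degree `≤ d`, so the set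
`{P = 1}` consists of the points whose monomial vector lies in the span of the monomial vectors
of at most `K ≤ (r+1)^d` of its points. Hence `F` is determined by a set of at most `K` points
and by `D`; there are at most `(2^r+1)^K` choices for the first and, since
`4^t C(N, k) ≤ C(N, k + t)` for `k ≤ t ≤ N/10`, at most `2^N / 4^(N/10)` for the second
(`N = 2^r`). When `r^(10d) < 2^r` the product is below `2^N / 10`.
-/

theorem Fintype.card_finset_card_le_le_pow (X : Type*) [Fintype X] (k : ℕ) :
    Fintype.card {B : Finset X // B.card ≤ k} ≤ (Fintype.card X + 1) ^ k := by
  have hcard : Fintype.card (Fin k → Option X) = (Fintype.card X + 1) ^ k := by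
    simp [Fintype.card_option]
  rw [← hcard]
  refine Fintype.card_le_of_injective (fun B i => B.1.toList[(i : ℕ)]?) fun B B' hBB' => ?_
  have hlist : B.1.toList = B'.1.toList := by
    refine List.ext_getElem? fun n => ?_
    by_cases hn : n < k
    · exact congrFun hBB' ⟨n, hn⟩
    · rw [List.getElem?_eq_none_iff.mpr (by rw [Finset.length_toList]; have := B.2; omega),
        List.getElem?_eq_none_iff.mpr (by rw [Finset.length_toList]; have := B'.2; omega)]
  exact Subtype.ext (by rw [← Finset.toList_toFinset B.1, hlist, Finset.toList_toFinset])

theorem Nat.four_pow_mul_choose_le_choose_add {n k : ℕ} :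
    ∀ {i : ℕ}, 5 * (k + i) ≤ n → 4 ^ i * n.choose k ≤ n.choose (k + i)
  | 0, _ => by simp
  | i + 1, h => by
    -- `C(n, j+1) (j+1) = C(n, j) (n-j)` and `n - j ≥ 4 (j+1)` for `j = k + i`
    have hstep : 4 * n.choose (k + i) ≤ n.choose (k + i + 1) := by
      refine Nat.le_of_mul_le_mul_right ?_ (Nat.succ_pos (k + i))
      rw [Nat.choose_succ_right_eq, mul_comm 4, mul_assoc]
      exact Nat.mul_le_mul_left _ (by omega)
    calc 4 ^ (i + 1) * n.choose k = 4 * (4 ^ i * n.choose k) := by ring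
      _ ≤ 4 * n.choose (k + i) :=
          Nat.mul_le_mul_left _ (four_pow_mul_choose_le_choose_add (by omega))
      _ ≤ n.choose (k + (i + 1)) := hstep

theorem Fintype.card_finset_card_le_eq_sum_choose (X : Type*) [Fintype X] (t : ℕ) :
    Fintype.card {D : Finset X // D.card ≤ t} =
      ∑ k ∈ Finset.range (t + 1), (Fintype.card X).choose k := by
  rw [Fintype.card_subtype, Finset.card_eq_sum_card_fiberwise (f := Finset.card)
    (t := Finset.range (t + 1)) fun D hD => by simpa [Nat.lt_succ_iff] using hD]
  refine Finset.sum_congr rfl fun k hk => ?_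
  rw [Finset.mem_range] at hk
  rw [← Finset.card_univ, ← Finset.card_powersetCard, Finset.powersetCard_eq_filter,
    Finset.powerset_univ, Finset.filter_filter]
  exact congrArg _ (Finset.filter_congr fun D _ => by omega)

theorem Fintype.four_pow_mul_card_finset_card_le_le {X : Type*} [Fintype X] {t : ℕ}
    (ht : 10 * t ≤ Fintype.card X) :
    4 ^ t * Fintype.card {D : Finset X // D.card ≤ t} ≤ 2 ^ Fintype.card X := by
  set n := Fintype.card X
  rw [Fintype.card_finset_card_le_eq_sum_choose, Finset.mul_sum]
  calc ∑ k ∈ Finset.range (t + 1), 4 ^ t * n.choose k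
      ≤ ∑ k ∈ Finset.range (t + 1), n.choose (k + t) := by
        refine Finset.sum_le_sum fun k hk => Nat.four_pow_mul_choose_le_choose_add ?_
        rw [Finset.mem_range] at hk
        omega
    _ = ∑ j ∈ Finset.Ico t (2 * t + 1), n.choose j := by
        rw [Finset.sum_Ico_eq_sum_range, show 2 * t + 1 - t = t + 1 by omega]
        simp only [add_comm]
    _ ≤ ∑ j ∈ Finset.range (n + 1), n.choose j := by
        refine Finset.sum_le_sum_of_subset fun j hj => ?_
        simp only [Finset.mem_Ico, Finset.mem_range] at hj ⊢
        omega
    _ = 2 ^ n := Nat.sum_range_choose n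

section ProbabilisticPolynomials

variable {ι : Type}

theorem HasProbPoly.mono {f : (ι → Bool) → Bool} {ε : ℝ} {d d' : ℕ} (hdd' : d ≤ d')
    (h : HasProbPoly f ε d) : HasProbPoly f ε d' :=
  let ⟨k, w, P, hw0, hw1, hdeg, herr⟩ := h
  ⟨k, w, P, hw0, hw1, fun i => (hdeg i).trans hdd', herr⟩

theorem exists_evalBool_eq_indicator [Fintype ι] (f : (ι → Bool) → Bool) :
    ∃ P : MvPolynomial ι ℝ, ∀ a, evalBool a P = if f a then 1 else 0 := by
  refine ⟨∑ b ∈ Finset.univ.filter (f · = true),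
    ∏ i, if b i then MvPolynomial.X i else 1 - MvPolynomial.X i, fun a => ?_⟩
  have hpoint : ∀ b : ι → Bool,
      evalBool a (∏ i, if b i then MvPolynomial.X i else 1 - MvPolynomial.X i) =
        if b = a then 1 else 0 := by
    intro b
    simp only [evalBool, map_prod, funext_iff]
    rw [← Fintype.prod_boole]
    refine Finset.prod_congr rfl fun i _ => ?_
    cases b i <;> cases ha : a i <;> simp [ha]
  simp only [evalBool] at hpoint ⊢
  rw [map_sum, Finset.sum_congr rfl fun b _ => hpoint b, Finset.sum_ite_eq']
  simp

theorem hasProbPoly_of_pdeg_le [Fintype ι] {f : (ι → Bool) → Bool} {ε : ℝ} {d : ℕ}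
    (hε : 0 ≤ ε) (h : pdeg ε f ≤ d) : HasProbPoly f ε d := by
  -- `pdeg` is an `sInf`, which is `0` when no degree is admissible
  obtain ⟨P, hP⟩ := exists_evalBool_eq_indicator f
  have hexact : HasProbPoly f ε P.totalDegree :=
    ⟨1, 1, fun _ => P, fun _ => zero_le_one, by simp, fun _ => le_rfl,
      fun a => by simp [hP a, hε]⟩
  exact HasProbPoly.mono h (Nat.sInf_mem (s := {d | HasProbPoly f ε d}) ⟨_, hexact⟩)

theorem HasProbPoly.exists_card_errors_le [Fintype ι] {f : (ι → Bool) → Bool} {ε : ℝ}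
    {d : ℕ} (h : HasProbPoly f ε d) :
    ∃ P : MvPolynomial ι ℝ, P.totalDegree ≤ d ∧
      ((Finset.univ.filter fun a => evalBool a P ≠ if f a then 1 else 0).card : ℝ) ≤
        ε * 2 ^ Fintype.card ι := by
  obtain ⟨k, w, P, hw0, hw1, hdeg, herr⟩ := h
  set E : Fin k → Finset (ι → Bool) :=
    fun i => Finset.univ.filter fun a => evalBool a (P i) ≠ if f a then 1 else 0
  obtain ⟨i₀, -, hmin⟩ := Finset.exists_min_image Finset.univ (fun i => (E i).card)
    (Finset.nonempty_of_sum_ne_zero (hw1 ▸ one_ne_zero))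
  refine ⟨P i₀, hdeg i₀, ?_⟩
  -- the least error count is at most the `w`-average of the error counts
  calc ((E i₀).card : ℝ) = ∑ i, w i * (E i₀).card := by
        rw [← Finset.sum_mul, hw1, one_mul]
    _ ≤ ∑ i, w i * (E i).card :=
        Finset.sum_le_sum fun i _ => mul_le_mul_of_nonneg_left
          (Nat.cast_le.mpr (hmin i (Finset.mem_univ i))) (hw0 i)
    _ = ∑ a, ∑ i ∈ Finset.univ.filter (fun i => a ∈ E i), w i := by
        simp_rw [mul_comm (w _), ← nsmul_eq_mul, ← Finset.sum_const]
        exact Finset.sum_comm' (by simp)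
    _ ≤ ∑ _a : ι → Bool, ε := Finset.sum_le_sum fun a _ => by simpa [E] using herr a
    _ = ε * 2 ^ Fintype.card ι := by simp [mul_comm]

end ProbabilisticPolynomials

section SpanningSubsets

variable {K V X : Type*} [Field K] [AddCommGroup V] [Module K V] [FiniteDimensional K V]

theorem exists_finset_subset_card_le_finrank_image_subset_span (u : X → V) (S : Set X) :
    ∃ B : Finset X, ↑B ⊆ S ∧ B.card ≤ Module.finrank K V ∧
      u '' S ⊆ Submodule.span K (u '' ↑B) := by
  obtain ⟨b, hbS, -, hspan, hli⟩ :=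
    exists_linearIndepOn_extension (linearIndepOn_empty K u) (Set.empty_subset S)
  have : Finite b := LinearIndependent.finite hli
  have : Fintype b := Fintype.ofFinite b
  refine ⟨b.toFinset, by simpa using hbS, ?_, by simpa using hspan⟩
  rw [Set.toFinset_card]
  exact LinearIndependent.fintype_card_le_finrank hli

theorem exists_finset_card_le_finrank_apply_eq_zero_iff_mem_span (u : X → V)
    (φ : V →ₗ[K] K) :
    ∃ B : Finset X, B.card ≤ Module.finrank K V ∧
      ∀ x, φ (u x) = 0 ↔ u x ∈ Submodule.span K (u '' ↑B) := by
  obtain ⟨B, hBS, hcard, hspan⟩ :=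
    exists_finset_subset_card_le_finrank_image_subset_span (K := K) u {x | φ (u x) = 0}
  refine ⟨B, hcard, fun x => ⟨fun hx => hspan ⟨x, hx, rfl⟩, fun hx => ?_⟩⟩
  have hker : Submodule.span K (u '' ↑B) ≤ LinearMap.ker φ :=
    Submodule.span_le.mpr <| Set.image_subset_iff.mpr fun y hy => hBS hy
  exact hker hx

end SpanningSubsets

theorem Finsupp.card_support_le_sum {σ : Type*} (α : σ →₀ ℕ) :
    α.support.card ≤ α.sum fun _ e => e := by
  simpa [Finsupp.sum] using Finset.card_nsmul_le_sum α.support α 1 fun i hi =>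
    Nat.one_le_iff_ne_zero.mpr (Finsupp.mem_support_iff.mp hi)

section MultilinearExpansion

variable {ι : Type}

theorem evalBool_eq_sum_coeff_mul_prod (a : ι → Bool) (P : MvPolynomial ι ℝ) :
    evalBool a P =
      ∑ α ∈ P.support, P.coeff α * ∏ i ∈ α.support, if a i then 1 else 0 := by
  refine Finset.sum_congr rfl fun α _ => congrArg _ (Finset.prod_congr rfl fun i hi => ?_)
  -- on `{0, 1}` every positive power is the identity
  cases ha : a i <;> simp [ha, zero_pow (Finsupp.mem_support_iff.mp hi)]

noncomputable def boolMonomials [Fintype ι] (d : ℕ) (a : ι → Bool) :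
    {T : Finset ι // T.card ≤ d} → ℝ :=
  fun T => ∏ i ∈ T.1, if a i then 1 else 0

theorem exists_evalBool_eq_sum_boolMonomials [Fintype ι] {d : ℕ} {P : MvPolynomial ι ℝ}
    (hP : P.totalDegree ≤ d) :
    ∃ c : {T : Finset ι // T.card ≤ d} → ℝ,
      ∀ a, evalBool a P = ∑ T, c T * boolMonomials d a T := by
  refine ⟨fun T => ∑ α ∈ P.support.filter (·.support = T.1), P.coeff α, fun a => ?_⟩
  have hmaps : ∀ α ∈ P.support, α.support ∈ Finset.univ.filter (·.card ≤ d) := fun α hα =>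
    Finset.mem_filter.mpr ⟨Finset.mem_univ _,
      α.card_support_le_sum.trans ((MvPolynomial.le_totalDegree hα).trans hP)⟩
  rw [evalBool_eq_sum_coeff_mul_prod, ← Finset.sum_fiberwise_of_maps_to hmaps,
    Finset.sum_subtype _ (p := (·.card ≤ d)) (by simp)]
  refine Finset.sum_congr rfl fun T _ => ?_
  rw [boolMonomials, Finset.sum_mul]
  exact Finset.sum_congr rfl fun α hα => by rw [(Finset.mem_filter.mp hα).2]

theorem exists_finset_evalBool_eq_one_iff_mem_span [Fintype ι] {d : ℕ} {P : MvPolynomial ι ℝ}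
    (hP : P.totalDegree ≤ d) :
    ∃ B : Finset (ι → Bool), B.card ≤ Fintype.card {T : Finset ι // T.card ≤ d} ∧
      ∀ a, evalBool a P = 1 ↔
        boolMonomials d a ∈ Submodule.span ℝ (boolMonomials d '' ↑B) := by
  have hdeg : (P - 1).totalDegree ≤ d :=
    (MvPolynomial.totalDegree_sub P 1).trans (by simpa using hP)
  obtain ⟨c, hc⟩ := exists_evalBool_eq_sum_boolMonomials hdeg
  obtain ⟨B, hcard, hB⟩ := exists_finset_card_le_finrank_apply_eq_zero_iff_mem_span
    (boolMonomials d) (Fintype.linearCombination ℝ c)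
  refine ⟨B, by simpa using hcard, fun a => ?_⟩
  rw [← hB, Fintype.linearCombination_apply]
  have hsub : evalBool a (P - 1) = evalBool a P - 1 := by simp [evalBool]
  simp only [smul_eq_mul, mul_comm (boolMonomials d a _), ← hc, hsub, sub_eq_zero]

end MultilinearExpansion

section Counting

variable {ι : Type} [Fintype ι]

noncomputable def spanDecode (d : ℕ) (B D : Finset (ι → Bool)) (a : ι → Bool) : Bool :=
  xor (decide (boolMonomials d a ∈ Submodule.span ℝ (boolMonomials d '' ↑B)))
    (decide (a ∈ D))

theorem HasProbPoly.exists_spanDecode_eq {f : (ι → Bool) → Bool} {ε : ℝ} {d : ℕ}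
    (hf : HasProbPoly f ε d) :
    ∃ B D : Finset (ι → Bool), B.card ≤ Fintype.card {T : Finset ι // T.card ≤ d} ∧
      (D.card : ℝ) ≤ ε * 2 ^ Fintype.card ι ∧ spanDecode d B D = f := by
  obtain ⟨P, hPdeg, hPerr⟩ := hf.exists_card_errors_le
  obtain ⟨B, hBcard, hB⟩ := exists_finset_evalBool_eq_one_iff_mem_span hPdeg
  set g : (ι → Bool) → Bool :=
    fun a => decide (boolMonomials d a ∈ Submodule.span ℝ (boolMonomials d '' ↑B))
  have hg : ∀ a, g a = decide (evalBool a P = 1) := fun a => by simp [g, hB]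
  refine ⟨B, Finset.univ.filter fun a => f a ≠ g a, hBcard, le_trans ?_ hPerr, ?_⟩
  · refine Nat.cast_le.mpr (Finset.card_le_card fun a ha => ?_)
    simp only [Finset.mem_filter, Finset.mem_univ, true_and, hg] at ha ⊢
    intro hPa
    cases hfa : f a <;> simp [hfa, hPa] at ha
  · funext a
    change xor (g a) (decide (a ∈ Finset.univ.filter fun a => f a ≠ g a)) = f a
    simp only [Finset.mem_filter, Finset.mem_univ, true_and]
    cases f a <;> cases g a <;> rfl

theorem card_pdeg_le_le [DecidableEq ι] {ε : ℝ} (hε : 0 ≤ ε) (d : ℕ) :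
    Nat.card {F : (ι → Bool) → Bool // pdeg ε F ≤ d} ≤
      Fintype.card
          {B : Finset (ι → Bool) // B.card ≤ Fintype.card {T : Finset ι // T.card ≤ d}} *
        Fintype.card
          {D : Finset (ι → Bool) // D.card ≤ ⌊ε * 2 ^ Fintype.card ι⌋₊} := by
  set K := Fintype.card {T : Finset ι // T.card ≤ d}
  set t := ⌊ε * 2 ^ Fintype.card ι⌋₊
  let decode
      (p : {B : Finset (ι → Bool) // B.card ≤ K} × {D : Finset (ι → Bool) // D.card ≤ t}) :
      (ι → Bool) → Bool :=
    spanDecode d p.1.1 p.2.1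
  have hsub : {F | pdeg ε F ≤ d} ⊆ Set.range decode := fun F hF => by
    obtain ⟨B, D, hB, hD, rfl⟩ := (hasProbPoly_of_pdeg_le hε hF).exists_spanDecode_eq
    exact ⟨(⟨B, hB⟩, ⟨D, Nat.le_floor hD⟩), rfl⟩
  calc Nat.card {F : (ι → Bool) → Bool // pdeg ε F ≤ d}
      ≤ Nat.card (Set.range decode) := Nat.card_mono (Set.finite_range _) hsub
    _ ≤ _ := (Finite.card_range_le decode).trans_eq
        (by rw [Nat.card_prod, Nat.card_eq_fintype_card, Nat.card_eq_fintype_card])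

end Counting

theorem Nat.pow_lt_two_pow_of_mul_logb_lt {n k m : ℕ} (hn : 0 < n)
    (h : (k : ℝ) * Real.logb 2 n < m) : n ^ k < 2 ^ m := by
  have hlt : (n : ℝ) ^ k < 2 ^ (m : ℝ) := by
    rwa [← Real.logb_lt_iff_lt_rpow one_lt_two (by positivity), Real.logb_pow]
  rw [Real.rpow_natCast] at hlt
  exact_mod_cast hlt

theorem ten_mul_two_pow_add_one_pow_lt_four_pow {r d : ℕ} (hr : 2 ≤ r) (hd : 1 ≤ d)
    (h : r ^ (10 * d) < 2 ^ r) :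
    10 * (2 ^ r + 1) ^ (r + 1) ^ d < 4 ^ (2 ^ r / 10) := by
  set M := r ^ d
  have hrM : r ≤ M := Nat.le_self_pow (by omega) r
  have hcube : 8 ≤ M ^ 3 := by
    simpa using Nat.pow_le_pow_left (hr.trans hrM) 3
  have hdeg : (r + 1) ^ d ≤ M ^ 2 := calc
    (r + 1) ^ d ≤ (r ^ 2) ^ d := Nat.pow_le_pow_left (by nlinarith) d
    _ = M ^ 2 := by rw [← pow_mul, mul_comm, pow_mul]
  have hexp_le : (r + 1) * (r + 1) ^ d ≤ 2 * M ^ 3 := calc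
    (r + 1) * (r + 1) ^ d ≤ (2 * M) * M ^ 2 := Nat.mul_le_mul (by omega) hdeg
    _ = 2 * M ^ 3 := by ring
  have hbig : 128 * M ^ 3 < 2 ^ r := calc
    128 * M ^ 3 = 2 ^ 7 * M ^ 3 := by norm_num
    _ ≤ M ^ 7 * M ^ 3 := Nat.mul_le_mul_right _ (Nat.pow_le_pow_left (hr.trans hrM) 7)
    _ = r ^ (10 * d) := by rw [← pow_add, mul_comm, pow_mul]
    _ < 2 ^ r := h
  calc 10 * (2 ^ r + 1) ^ (r + 1) ^ d ≤ 2 ^ 4 * (2 ^ (r + 1)) ^ (r + 1) ^ d := by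
        gcongr
        · norm_num
        · rw [pow_succ]; have := Nat.one_le_two_pow (n := r); omega
    _ = 2 ^ (4 + (r + 1) * (r + 1) ^ d) := by rw [← pow_mul, ← pow_add]
    _ < 2 ^ (2 * (2 ^ r / 10)) := Nat.pow_lt_pow_right (by norm_num) (by omega)
    _ = 4 ^ (2 ^ r / 10) := by rw [pow_mul]; norm_num

theorem ten_mul_card_pdeg_le_lt {r d : ℕ} (hr : 2 ≤ r) (hd : 1 ≤ d)
    (h : r ^ (10 * d) < 2 ^ r) :
    10 * Nat.card {F : (Fin r → Bool) → Bool // pdeg (1/10) F ≤ d} < 2 ^ 2 ^ r := by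
  set N := 2 ^ r
  set t := N / 10
  have hN : Fintype.card (Fin r → Bool) = N := by simp [N]
  have hfloor : ⌊(1/10 : ℝ) * 2 ^ Fintype.card (Fin r)⌋₊ = t := by
    rw [Fintype.card_fin, show t = N / 10 from rfl, ← Nat.floor_div_eq_div (K := ℝ)]
    congr 1
    push_cast [N]
    ring
  have hcount := card_pdeg_le_le (ι := Fin r) (ε := 1/10) (by norm_num) d
  rw [hfloor] at hcount
  have hB := Fintype.card_finset_card_le_le_pow (Fin r → Bool)
    (Fintype.card {T : Finset (Fin r) // T.card ≤ d})
  have hT := Fintype.card_finset_card_le_le_pow (Fin r) d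
  have hD := Fintype.four_pow_mul_card_finset_card_le_le (X := Fin r → Bool) (t := t) (by omega)
  rw [hN] at hB hD
  rw [Fintype.card_fin] at hT
  have hF : Nat.card {F : (Fin r → Bool) → Bool // pdeg (1/10) F ≤ d} ≤
      (N + 1) ^ (r + 1) ^ d * Fintype.card {D : Finset (Fin r → Bool) // D.card ≤ t} :=
    hcount.trans (Nat.mul_le_mul_right _ (hB.trans (Nat.pow_le_pow_right (by omega) hT)))
  refine Nat.lt_of_mul_lt_mul_left (a := 4 ^ t) ?_
  calc 4 ^ t * (10 * Nat.card {F : (Fin r → Bool) → Bool // pdeg (1/10) F ≤ d})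
      ≤ 10 * (N + 1) ^ (r + 1) ^ d *
          (4 ^ t * Fintype.card {D : Finset (Fin r → Bool) // D.card ≤ t}) := by
        linarith [Nat.mul_le_mul_left (10 * 4 ^ t) hF]
    _ ≤ 10 * (N + 1) ^ (r + 1) ^ d * 2 ^ N := Nat.mul_le_mul_left _ hD
    _ < 4 ^ t * 2 ^ N := Nat.mul_lt_mul_of_pos_right
        (ten_mul_two_pow_add_one_pow_lt_four_pow hr hd h) (by positivity)

theorem uniform_random_function_lower_bound (r d : ℕ) (hr : 2 ≤ r) (hd : 1 ≤ d)
    (h : 10 * (d : ℝ) * Real.logb 2 r < (r : ℝ)) :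
    (Nat.card {F : (Fin r → Bool) → Bool // pdeg (1/10) F ≤ d} : ℝ)
      < (1/10) * 2 ^ (2 ^ r) := by
  have hpow : r ^ (10 * d) < 2 ^ r :=
    Nat.pow_lt_two_pow_of_mul_logb_lt (by omega) (by push_cast; exact h)
  have hcard := ten_mul_card_pdeg_le_lt hr hd hpow
  rw [← Nat.cast_lt (α := ℝ)] at hcard
  push_cast at hcard
  linarith
end

section
/- There exists an absolute constant C > 0 such that for every Boolean function f : {0,1}^n → {0,1} and all 0 < δ < ε ≤ 1/3, pdeg_δ(f) ≤ pdeg_ε(f) · C · log(1/δ) / log(1/ε). -/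
open scoped Classical

/-!
Majority amplification. Draw `2k+1` independent samples from an `ε`-error probabilistic
polynomial of degree `d` and combine them with the multilinear extension of the majority
function, a polynomial of degree `(2k+1)d`. At a fixed input this extension returns the
correct bit whenever a majority of the samples is correct, whatever values the wrong samples
take, so its error is a binomial tail, at most `2^(2k+1) ε^(k+1) (1-ε)^k ≤ (4ε(1-ε))^k`.
For `ε ≤ 1/3` one has `(4ε(1-ε))^24 ≤ ε`, so `k = 24 ⌈log δ / log ε⌉` brings the error down
to `δ`, and `2k+1 = O(log(1/δ) / log(1/ε))`.
-/

open Finset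

section CubeIndicator

variable {ι R : Type*} [Fintype ι] [CommRing R]

def cubeIndicator (b : ι → Bool) (x : ι → R) : R :=
  ∏ j, if b j then x j else 1 - x j

theorem cubeIndicator_eq_zero {b : ι → Bool} {x : ι → R} (j : ι)
    (hj : x j = if b j then 0 else 1) : cubeIndicator b x = 0 :=
  prod_eq_zero (mem_univ j) (by cases h : b j <;> simp_all)

theorem cubeIndicator_vertex (b a : ι → Bool) :
    cubeIndicator b (fun j => if a j then (1 : R) else 0) = if a = b then 1 else 0 := by
  have hfactor : ∀ j, (if b j then (if a j then (1 : R) else 0) else 1 - if a j then 1 else 0) =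
      if a j = b j then 1 else 0 := by
    intro j
    cases a j <;> cases b j <;> simp
  simp only [cubeIndicator, hfactor, Fintype.prod_boole, funext_iff]

theorem map_cubeIndicator {S : Type*} [CommRing S] (φ : R →+* S) (b : ι → Bool) (x : ι → R) :
    φ (cubeIndicator b x) = cubeIndicator b fun j => φ (x j) := by
  simp only [cubeIndicator, map_prod, apply_ite φ, map_sub, map_one]

end CubeIndicator

section Threshold

variable {ι R : Type*} [Fintype ι] [DecidableEq ι] [CommRing R]

noncomputable def threshold (m : ℕ) (x : ι → R) : R :=
  ∑ b with m ≤ #{j | b j}, cubeIndicator b x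

theorem sum_cubeIndicator (x : ι → R) : ∑ b, cubeIndicator b x = 1 := by
  unfold cubeIndicator
  rw [← Fintype.prod_sum fun j (c : Bool) => if c then x j else 1 - x j]
  simp

theorem map_threshold {S : Type*} [CommRing S] (φ : R →+* S) (m : ℕ) (x : ι → R) :
    φ (threshold m x) = threshold m fun j => φ (x j) := by
  simp only [threshold, map_sum, map_cubeIndicator]

theorem threshold_eq_zero {m : ℕ} {x : ι → R} (S : Finset ι) (hS : ∀ j ∈ S, x j = 0)
    (hcard : Fintype.card ι < m + #S) : threshold m x = 0 := by
  refine sum_eq_zero fun b hb => ?_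
  obtain ⟨j, hj⟩ := inter_nonempty_of_card_lt_card_add_card (subset_univ {j | b j})
    (subset_univ S) (by rw [card_univ]; have := (mem_filter.mp hb).2; omega)
  rw [mem_inter, mem_filter] at hj
  exact cubeIndicator_eq_zero j (by rw [if_pos hj.1.2]; exact hS j hj.2)

theorem threshold_eq_one {m : ℕ} {x : ι → R} (S : Finset ι) (hS : ∀ j ∈ S, x j = 1)
    (hcard : m ≤ #S) : threshold m x = 1 := by
  have hlow : ∑ b with ¬ m ≤ #{j | b j}, cubeIndicator b x = 0 := by
    refine sum_eq_zero fun b hb => ?_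
    obtain ⟨j, hjS, hjb⟩ : ∃ j ∈ S, j ∉ ({j | b j} : Finset ι) :=
      not_subset.mp fun hsub => (mem_filter.mp hb).2 (hcard.trans (card_le_card hsub))
    rw [mem_filter, not_and] at hjb
    exact cubeIndicator_eq_zero j (by rw [if_neg (hjb (mem_univ j))]; exact hS j hjS)
  rw [← sum_cubeIndicator x, ← sum_filter_add_sum_filter_not univ (fun b => m ≤ #{j | b j}),
    hlow, add_zero, threshold]

end Threshold

section Degree

variable {ι σ R : Type*} [Fintype ι] [CommRing R]

theorem totalDegree_cubeIndicator_le (b : ι → Bool) {p : ι → MvPolynomial σ R} {d : ℕ}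
    (hp : ∀ j, (p j).totalDegree ≤ d) : (cubeIndicator b p).totalDegree ≤ Fintype.card ι * d := by
  refine (MvPolynomial.totalDegree_finsetProd _ _).trans ?_
  calc ∑ j, (if b j then p j else 1 - p j).totalDegree ≤ ∑ _j : ι, d := by
        refine sum_le_sum fun j _ => ?_
        split_ifs
        · exact hp j
        · exact (MvPolynomial.totalDegree_sub _ _).trans (max_le (by simp) (hp j))
    _ = Fintype.card ι * d := by simp

theorem totalDegree_threshold_le [DecidableEq ι] (m : ℕ) {p : ι → MvPolynomial σ R} {d : ℕ}
    (hp : ∀ j, (p j).totalDegree ≤ d) : (threshold m p).totalDegree ≤ Fintype.card ι * d :=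
  (MvPolynomial.totalDegree_finsetSum _ _).trans
    (Finset.sup_le fun b _ => totalDegree_cubeIndicator_le b hp)

end Degree

section ProductWeights

variable {ι α R : Type*} [Fintype ι] [DecidableEq ι] [Fintype α] [CommRing R] {w : α → R}

theorem sum_prod_eq_one (hw : ∑ i, w i = 1) : ∑ v : ι → α, ∏ j, w (v j) = 1 := by
  rw [← Fintype.prod_sum fun _ i => w i]
  simp [hw]

theorem sum_prod_pattern_eq_cubeIndicator [DecidableEq α] (hw : ∑ i, w i = 1) (bad : Finset α)
    (b : ι → Bool) :
    ∑ v : ι → α with (fun j => decide (v j ∈ bad)) = b, ∏ j, w (v j) =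
      cubeIndicator b fun _ => ∑ i ∈ bad, w i := by
  have hfiber : ({v : ι → α | (fun j => decide (v j ∈ bad)) = b} : Finset (ι → α)) =
      Fintype.piFinset fun j => if b j then bad else badᶜ := by
    ext v
    simp only [mem_filter, mem_univ, true_and, Fintype.mem_piFinset, funext_iff]
    refine forall_congr' fun j => ?_
    cases b j <;> simp
  have hgood : ∑ i ∈ badᶜ, w i = 1 - ∑ i ∈ bad, w i := by
    rw [← hw, ← sum_add_sum_compl bad, add_sub_cancel_left]
  rw [hfiber, ← prod_univ_sum, cubeIndicator]
  refine prod_congr rfl fun j _ => ?_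
  split_ifs
  · rfl
  · exact hgood

theorem sum_prod_le_card_eq_threshold [DecidableEq α] (hw : ∑ i, w i = 1) (bad : Finset α)
    (m : ℕ) :
    ∑ v : ι → α with m ≤ #{j | v j ∈ bad}, ∏ j, w (v j) =
      threshold m fun _ : ι => ∑ i ∈ bad, w i := by
  rw [threshold, ← sum_fiberwise_of_maps_to (g := fun v j => decide (v j ∈ bad))
    (t := {b : ι → Bool | m ≤ #{j | b j}}) (fun v hv => by simpa using hv)]
  refine sum_congr rfl fun b hb => ?_
  rw [← sum_prod_pattern_eq_cubeIndicator hw bad b, filter_filter]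
  congr 1
  ext v
  simp only [mem_filter, mem_univ, true_and, and_iff_right_iff_imp]
  rintro rfl
  simpa using hb

end ProductWeights

section Majority

variable {ι : Type*} [Fintype ι]

theorem cubeIndicator_const_le {β : ℝ} (hβ0 : 0 ≤ β) (hβ : β ≤ 1 / 2) {m : ℕ} {b : ι → Bool}
    (hb : m ≤ #{j | b j}) :
    cubeIndicator b (fun _ => β) ≤ β ^ m * (1 - β) ^ (Fintype.card ι - m) := by
  obtain ⟨r, hr⟩ := Nat.exists_eq_add_of_le hb
  have hcard : #{j | b j} + #{j | ¬ b j} = Fintype.card ι := by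
    rw [card_filter_add_card_filter_not, card_univ]
  have hrest : Fintype.card ι - m = r + #{j | ¬ b j} := by omega
  rw [cubeIndicator, prod_ite, prod_const, prod_const, hr, hrest, pow_add, pow_add, mul_assoc]
  gcongr
  · exact pow_nonneg (by linarith) _
  · linarith

variable [DecidableEq ι]

theorem threshold_majority_eq {R : Type*} [CommRing R] {k : ℕ}
    (hcard : Fintype.card ι = 2 * k + 1) {x : ι → R} (c : Bool) (S : Finset ι)
    (hS : ∀ j ∈ S, x j = if c then 1 else 0) (hSk : k + 1 ≤ #S) : threshold (k + 1) x = if c then 1 else 0 := by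
  cases c
  · exact threshold_eq_zero S hS (by omega)
  · exact threshold_eq_one S hS hSk

theorem threshold_const_le {β : ℝ} (hβ0 : 0 ≤ β) (hβ : β ≤ 1 / 2) (m : ℕ) :
    threshold m (fun _ : ι => β) ≤
      2 ^ Fintype.card ι * (β ^ m * (1 - β) ^ (Fintype.card ι - m)) := by
  refine (sum_le_card_nsmul _ _ _ fun b hb =>
    cubeIndicator_const_le hβ0 hβ (mem_filter.mp hb).2).trans ?_
  rw [nsmul_eq_mul]
  gcongr
  · exact mul_nonneg (pow_nonneg hβ0 _) (pow_nonneg (by linarith) _)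
  · exact_mod_cast (card_filter_le _ _).trans (by simp)

theorem threshold_majority_const_le {k : ℕ} (hcard : Fintype.card ι = 2 * k + 1) {β : ℝ}
    (hβ0 : 0 ≤ β) (hβ : β ≤ 1 / 2) :
    threshold (k + 1) (fun _ : ι => β) ≤ (4 * β * (1 - β)) ^ k := by
  have hθ : 0 ≤ 4 * β * (1 - β) := by nlinarith
  calc threshold (k + 1) (fun _ : ι => β)
      ≤ 2 ^ (2 * k + 1) * (β ^ (k + 1) * (1 - β) ^ (2 * k + 1 - (k + 1))) := by
        rw [← hcard]; exact threshold_const_le hβ0 hβ (k + 1)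
    _ = 2 * β * (4 * β * (1 - β)) ^ k := by
        rw [show 2 * k + 1 - (k + 1) = k by omega, pow_succ, pow_mul, mul_pow, mul_pow]; ring
    _ ≤ (4 * β * (1 - β)) ^ k := mul_le_of_le_one_left (pow_nonneg hθ k) (by linarith)

end Majority

section ProbPoly

variable {ι : Type} {f : (ι → Bool) → Bool} {ε : ℝ} {d : ℕ}

theorem HasProbPoly.of_fintype {κ : Type*} [Fintype κ] (w : κ → ℝ) (P : κ → MvPolynomial ι ℝ)
    (hw0 : ∀ i, 0 ≤ w i) (hw1 : ∑ i, w i = 1) (hdeg : ∀ i, (P i).totalDegree ≤ d)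
    (herr : ∀ a, ∑ i with evalBool a (P i) ≠ (if f a then 1 else 0), w i ≤ ε) :
    HasProbPoly f ε d := by
  let e := (Fintype.equivFin κ).symm
  refine ⟨Fintype.card κ, w ∘ e, P ∘ e, fun i => hw0 _, ?_, fun i => hdeg _, fun a => ?_⟩
  · rw [← hw1]
    exact e.sum_comp w
  · have herr_a := herr a
    rw [sum_filter] at herr_a ⊢
    exact (e.sum_comp fun i => if evalBool a (P i) ≠ _ then w i else 0).trans_le herr_a

theorem HasProbPoly.mono_s19 {ε' : ℝ} (h : HasProbPoly f ε d) (hε : ε ≤ ε') : HasProbPoly f ε' d :=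
  let ⟨k, w, P, hw0, hw1, hdeg, herr⟩ := h
  ⟨k, w, P, hw0, hw1, hdeg, fun a => (herr a).trans hε⟩

theorem hasProbPoly_card [Fintype ι] (hε : 0 ≤ ε) : HasProbPoly f ε (Fintype.card ι) := by
  let P : MvPolynomial ι ℝ := ∑ b with f b, cubeIndicator b MvPolynomial.X
  have hP : ∀ a, evalBool a P = if f a then 1 else 0 := fun a => by
    simp only [P, evalBool, map_sum, map_cubeIndicator, MvPolynomial.eval_X,
      cubeIndicator_vertex, sum_ite_eq, mem_filter, mem_univ, true_and]
  refine ⟨1, fun _ => 1, fun _ => P, fun _ => zero_le_one, by simp, fun _ => ?_, fun a => ?_⟩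
  · simpa using (MvPolynomial.totalDegree_finsetSum _ _).trans
      (Finset.sup_le fun b _ => totalDegree_cubeIndicator_le (d := 1) b fun j => by simp)
  · simpa [hP] using hε

-- `sInf ∅ = 0`, so it is `hasProbPoly_card` that makes the infimum `pdeg ε f` attained.
theorem hasProbPoly_pdeg [Fintype ι] (hε : 0 ≤ ε) : HasProbPoly f ε (pdeg ε f) :=
  Nat.sInf_mem (s := {d | HasProbPoly f ε d}) ⟨_, hasProbPoly_card hε⟩

theorem HasProbPoly.amplify (h : HasProbPoly f ε d) (hε : ε ≤ 1 / 2) (k : ℕ) :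
    HasProbPoly f ((4 * ε * (1 - ε)) ^ k) ((2 * k + 1) * d) := by
  obtain ⟨s, w, P, hw0, hw1, hdeg, herr⟩ := h
  have hcard : Fintype.card (Fin (2 * k + 1)) = 2 * k + 1 := Fintype.card_fin _
  refine HasProbPoly.of_fintype (κ := Fin (2 * k + 1) → Fin s) (fun v => ∏ j, w (v j))
    (fun v => threshold (k + 1) fun j => P (v j)) (fun v => prod_nonneg fun j _ => hw0 _)
    (sum_prod_eq_one hw1) (fun v => ?_) (fun a => ?_)
  · exact (totalDegree_threshold_le (k + 1) fun j => hdeg (v j)).trans_eq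
      (by rw [hcard, mul_comm])
  set bad : Finset (Fin s) := {i | evalBool a (P i) ≠ if f a then 1 else 0}
  have hβ : ∑ i ∈ bad, w i ≤ ε := herr a
  have hβ0 : 0 ≤ ∑ i ∈ bad, w i := sum_nonneg fun i _ => hw0 i
  have herr_sub : ({v | evalBool a (threshold (k + 1) fun j => P (v j)) ≠ if f a then 1 else 0} :
      Finset (Fin (2 * k + 1) → Fin s)) ⊆
      ({v | k + 1 ≤ #{j | v j ∈ bad}} : Finset (Fin (2 * k + 1) → Fin s)) := by
    intro v
    simp only [mem_filter, mem_univ, true_and]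
    contrapose!
    intro hfew
    have hgood := card_filter_add_card_filter_not (s := univ) fun j => v j ∈ bad
    rw [card_univ, hcard] at hgood
    have hmap : evalBool a (threshold (k + 1) fun j => P (v j)) =
        threshold (k + 1) fun j => evalBool a (P (v j)) :=
      map_threshold (MvPolynomial.eval fun i => if a i then (1 : ℝ) else 0) _ _
    rw [hmap]
    refine threshold_majority_eq hcard (f a) {j | v j ∉ bad} (fun j hj => ?_) (by omega)
    simpa only [bad, mem_filter, mem_univ, true_and, not_not] using hj
  calc _ ≤ ∑ v : Fin (2 * k + 1) → Fin s with k + 1 ≤ #{j | v j ∈ bad}, ∏ j, w (v j) :=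
        sum_le_sum_of_subset_of_nonneg herr_sub fun v _ _ => prod_nonneg fun j _ => hw0 _
    _ = threshold (k + 1) fun _ => ∑ i ∈ bad, w i := sum_prod_le_card_eq_threshold hw1 bad _
    _ ≤ (4 * (∑ i ∈ bad, w i) * (1 - ∑ i ∈ bad, w i)) ^ k :=
        threshold_majority_const_le hcard hβ0 (hβ.trans hε)
    _ ≤ (4 * ε * (1 - ε)) ^ k := pow_le_pow_left₀ (by nlinarith) (by nlinarith) k

end ProbPoly

theorem four_mul_one_sub_pow_le {ε : ℝ} (hε0 : 0 ≤ ε) (hε : ε ≤ 1 / 3) :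
    (4 * ε * (1 - ε)) ^ 24 ≤ ε := by
  have hθ0 : 0 ≤ 4 * ε * (1 - ε) := by nlinarith
  rcases le_or_gt ε (1 / 16) with hsmall | hlarge
  · have hθ : 4 * ε * (1 - ε) ≤ 4 * ε := by nlinarith
    calc (4 * ε * (1 - ε)) ^ 24 ≤ (4 * ε * (1 - ε)) ^ 2 :=
          pow_le_pow_of_le_one hθ0 (by linarith) (by norm_num)
      _ ≤ (4 * ε) ^ 2 := pow_le_pow_left₀ hθ0 hθ 2
      _ ≤ ε := by nlinarith
  · calc (4 * ε * (1 - ε)) ^ 24 ≤ (8 / 9) ^ 24 := pow_le_pow_left₀ hθ0 (by nlinarith) 24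
      _ ≤ ε := by norm_num at hlarge ⊢; linarith

theorem pow_ceil_logb_le {ε δ : ℝ} (hε0 : 0 < ε) (hε1 : ε < 1) (hδ : 0 < δ) :
    ε ^ ⌈Real.logb ε δ⌉₊ ≤ δ := by
  calc ε ^ ⌈Real.logb ε δ⌉₊ = ε ^ (⌈Real.logb ε δ⌉₊ : ℝ) := (Real.rpow_natCast ε _).symm
    _ ≤ ε ^ Real.logb ε δ := Real.rpow_le_rpow_of_exponent_ge hε0 hε1.le (Nat.le_ceil _)
    _ = δ := Real.rpow_logb hε0 hε1.ne hδ

theorem pdeg_error_reduction :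
    ∃ C : ℝ, 0 < C ∧
      ∀ (n : ℕ) (f : (Fin n → Bool) → Bool) (δ ε : ℝ),
        0 < δ → δ < ε → ε ≤ 1/3 →
        (pdeg δ f : ℝ) ≤
          (pdeg ε f : ℝ) * C * Real.logb 2 (1/δ) / Real.logb 2 (1/ε) := by
  -- with `r = log δ / log ε > 1` and `k = 24 ⌈r⌉`, `2k + 1 < 48 r + 49 < 97 r`
  refine ⟨97, by norm_num, fun n f δ ε hδ hδε hε => ?_⟩
  have hε0 : 0 < ε := hδ.trans hδε
  have hlogε : Real.log ε < 0 := Real.log_neg hε0 (by linarith)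
  set r := Real.logb ε δ
  have hratio : Real.logb 2 (1 / δ) / Real.logb 2 (1 / ε) = r := by
    simp only [r, Real.logb, one_div, Real.log_inv]
    field_simp
  have hr : 1 < r := (one_lt_div_of_neg hlogε).mpr (Real.log_lt_log hδ hδε)
  set k := 24 * ⌈r⌉₊
  have hsmall : (4 * ε * (1 - ε)) ^ k ≤ δ := by
    rw [pow_mul]
    exact (pow_le_pow_left₀ (by positivity) (four_mul_one_sub_pow_le hε0.le hε) _).trans
      (pow_ceil_logb_le hε0 (by linarith) hδ)
  have hpdeg : pdeg δ f ≤ (2 * k + 1) * pdeg ε f :=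
    Nat.sInf_le (((hasProbPoly_pdeg hε0.le).amplify (by linarith) k).mono_s19 hsmall)
  have hk : (2 * k + 1 : ℝ) ≤ 97 * r := by
    have := Nat.ceil_lt_add_one (zero_le_one.trans hr.le)
    push_cast [k]
    linarith
  rw [mul_div_assoc, hratio]
  calc (pdeg δ f : ℝ) ≤ (2 * k + 1) * pdeg ε f := by exact_mod_cast hpdeg
    _ ≤ 97 * r * pdeg ε f := by gcongr
    _ = pdeg ε f * 97 * r := by ring
end
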